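/- Let G be a graph containing six distinct vertices x_0, x_1, y_0, y_1, z, z' such that z is a common neighbor of x_0 and x_1 with z ∉ N(y_0) ∪ N(y_1), and z' is a common neighbor of y_0 and y_1 with z' ∉ N(x_0) ∪ N(x_1). Then every unweighted leaf root of G contains the quartet x_0 x_1 | y_0 y_1. -/

import Mathlib

open SimpleGraph

namespace LeafPaper

/-- A leaf of a graph: a vertex with exactly one neighbor. -/
def IsLeaf {W : Type} (T : SimpleGraph W) (w : W) : Prop := ∃! u, T.Adj w u

/-- The edge list of the (unique, if `T` is a tree) path between `x` and `y`. -/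
noncomputable def treePathEdges {W : Type} (T : SimpleGraph W) (x y : W) :
    List (Sym2 W) := by
  classical
  exact if h : T.Reachable x y then (Classical.choice h).bypass.edges else []

/-- The weighted distance between `x` and `y` in a tree `T` with edge weighting `f`:
the sum of the weights of the edges on the (unique) path between `x` and `y`. -/
noncomputable def wdist {W : Type} (T : SimpleGraph W) (f : Sym2 W → ℕ) (x y : W) : ℕ :=
  ((treePathEdges T x y).map f).sum

/-- `(T, f)` is a leaf root of `G` with threshold `k`, where `ι` identifies the
vertices of `G` with the leaves of `T`. -/
def IsLeafRoot {V W : Type} (G : SimpleGraph V) (T : SimpleGraph W) (ι : V → W)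
    (f : Sym2 W → ℕ) (k : ℕ) : Prop :=
  T.IsTree ∧ Function.Injective ι ∧ (∀ w : W, IsLeaf T w ↔ w ∈ Set.range ι) ∧
    (∀ e ∈ T.edgeSet, 0 < f e) ∧
    ∀ u v : V, u ≠ v → (G.Adj u v ↔ wdist T f (ι u) (ι v) ≤ k)

/-- An unweighted tree `T` is an unweighted leaf root of `G` if some positive
integer weighting of its edges makes it a leaf root of `G`. -/
def IsUnweightedLeafRoot {V W : Type} (G : SimpleGraph V) (T : SimpleGraph W)
    (ι : V → W) : Prop :=
  ∃ (f : Sym2 W → ℕ) (k : ℕ), IsLeafRoot G T ι f k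

/-- `G` is a leaf power: there are a finite tree `T` whose leaf set is exactly `V(G)`
and a positive threshold `k` such that distinct vertices are adjacent in `G` iff their
tree distance is at most `k`. -/
def IsLeafPower {V : Type} (G : SimpleGraph V) : Prop :=
  ∃ (W : Type) (T : SimpleGraph W) (ι : V → W) (k : ℕ),
    Finite W ∧ T.IsTree ∧ Function.Injective ι ∧
      (∀ w : W, IsLeaf T w ↔ w ∈ Set.range ι) ∧ 0 < k ∧
      ∀ u v : V, u ≠ v → (G.Adj u v ↔ T.dist (ι u) (ι v) ≤ k)

/-- An alternating cycle `(x 0, y 0, x 1, y 1, …)` of `G`: `2c` distinct vertices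
such that `x i y i` is an edge and `y i x (i+1)` is a non-edge (indices mod `c`). -/
def IsAltCycle {V : Type} (G : SimpleGraph V) (c : ℕ) (x y : ZMod c → V) : Prop :=
  2 ≤ c ∧ Function.Injective (Sum.elim x y) ∧
    ∀ i : ZMod c, G.Adj (x i) (y i) ∧ ¬ G.Adj (y i) (x (i + 1))

/-- The weighted tree `(T, f)` satisfies the alternating cycle given by `x, y`
with threshold `k`. -/
def Satisfies {V W : Type} (T : SimpleGraph W) (f : Sym2 W → ℕ) (ι : V → W)
    (c : ℕ) (x y : ZMod c → V) (k : ℕ) : Prop :=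
  ∀ i : ZMod c, wdist T f (ι (x i)) (ι (y i)) ≤ k ∧
    k < wdist T f (ι (y i)) (ι (x (i + 1)))

/-- The unweighted tree `T` can satisfy the alternating cycle given by `x, y`. -/
def CanSatisfy {V W : Type} (T : SimpleGraph W) (ι : V → W) (c : ℕ)
    (x y : ZMod c → V) : Prop :=
  ∃ (f : Sym2 W → ℕ) (k : ℕ), (∀ e ∈ T.edgeSet, 0 < f e) ∧ Satisfies T f ι c x y k

/-- `T` contains the quartet `ab|cd`: the four vertices are distinct leaves of `T` and
the path between `a` and `b` is vertex-disjoint from the path between `c` and `d`. -/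
def ContainsQuartet {W : Type} (T : SimpleGraph W) (a b c d : W) : Prop :=
  IsLeaf T a ∧ IsLeaf T b ∧ IsLeaf T c ∧ IsLeaf T d ∧ a ≠ b ∧ c ≠ d ∧
    ∀ (p : T.Walk a b) (p' : T.Walk c d), p.IsPath → p'.IsPath →
      ∀ w : W, w ∈ p.support → w ∉ p'.support

/-!
In a tree, a vertex `w` on the path between `a` and `b` lies on the path from any `z` to `a`
or on the path from `z` to `b`, since the path `a`–`b` is obtained from the walk `a`–`z`–`b` by
shortcutting. So if `a, b` are within distance `k` of `z` while `c, c'` are farther than `k`, the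
triangle inequality makes one of `a, b` strictly closer to `w` than both `c` and `c'`. A vertex
common to the paths `x₀`–`x₁` and `y₀`–`y₁` would therefore have, via `z`, some `xᵢ` strictly
closer than both `yⱼ` and, via `z'`, some `yⱼ` strictly closer than both `xᵢ`: impossible.
-/

theorem _root_.SimpleGraph.IsAcyclic.eq_of_isPath {W : Type} {T : SimpleGraph W}
    (hT : T.IsAcyclic) {a b : W} {p q : T.Walk a b} (hp : p.IsPath) (hq : q.IsPath) :
    p = q :=
  congrArg Subtype.val ((hT.subsingleton_path a b).elim ⟨p, hp⟩ ⟨q, hq⟩)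

theorem _root_.SimpleGraph.IsAcyclic.mem_support_or_mem_support {W : Type}
    {T : SimpleGraph W} (hT : T.IsAcyclic) {a b w : W} {p : T.Walk a b} (hp : p.IsPath)
    (hw : w ∈ p.support) {z : W} (q : T.Walk z a) (r : T.Walk z b) :
    w ∈ q.support ∨ w ∈ r.support := by
  classical
  have hbypass : (q.reverse.append r).bypass = p :=
    hT.eq_of_isPath (Walk.bypass_isPath _) hp
  rw [← hbypass] at hw
  have hw' := Walk.support_bypass_subset_support _ hw
  rwa [Walk.mem_support_append_iff, Walk.support_reverse, List.mem_reverse] at hw'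

section WeightedDistance

variable {W : Type} {T : SimpleGraph W} {f : Sym2 W → ℕ}

theorem wdist_eq_sum_of_isPath (hT : T.IsAcyclic) {a b : W} {p : T.Walk a b}
    (hp : p.IsPath) : wdist T f a b = (p.edges.map f).sum := by
  classical
  have hreach : T.Reachable a b := ⟨p⟩
  rw [wdist, treePathEdges, dif_pos hreach, hT.eq_of_isPath (Walk.bypass_isPath _) hp]

theorem wdist_le_sum (hT : T.IsAcyclic) {a b : W} (p : T.Walk a b) :
    wdist T f a b ≤ (p.edges.map f).sum := by
  classical
  rw [wdist_eq_sum_of_isPath hT p.bypass_isPath]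
  obtain ⟨l, hperm, hsub⟩ :=
    p.bypass_isPath.edges_nodup.subperm (Walk.edges_bypass_subset_edges p)
  calc (p.bypass.edges.map f).sum = (l.map f).sum := ((hperm.map f).sum_eq).symm
    _ ≤ (p.edges.map f).sum := (hsub.map f).sum_le_sum fun _ _ => Nat.zero_le _

theorem wdist_triangle (hT : T.IsAcyclic) {a b c : W} (hab : T.Reachable a b)
    (hbc : T.Reachable b c) : wdist T f a c ≤ wdist T f a b + wdist T f b c := by
  classical
  obtain ⟨p⟩ := hab
  obtain ⟨q⟩ := hbc
  calc wdist T f a c ≤ ((p.bypass.append q.bypass).edges.map f).sum := wdist_le_sum hT _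
    _ = wdist T f a b + wdist T f b c := by
      rw [Walk.edges_append, List.map_append, List.sum_append,
        wdist_eq_sum_of_isPath hT p.bypass_isPath, wdist_eq_sum_of_isPath hT q.bypass_isPath]

theorem wdist_eq_add_of_mem_support (hT : T.IsAcyclic) {a b w : W} {p : T.Walk a b}
    (hp : p.IsPath) (hw : w ∈ p.support) :
    wdist T f a b = wdist T f a w + wdist T f w b := by
  classical
  have hsplit : ((p.takeUntil w hw).append (p.dropUntil w hw)).IsPath := by
    rwa [Walk.take_spec p hw]
  rw [wdist_eq_sum_of_isPath hT hsplit, wdist_eq_sum_of_isPath hT (hp.takeUntil hw),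
    wdist_eq_sum_of_isPath hT (hp.dropUntil hw), Walk.edges_append, List.map_append,
    List.sum_append]

theorem wdist_eq_add_or_wdist_eq_add (hT : T.IsTree) {a b w : W} {p : T.Walk a b}
    (hp : p.IsPath) (hw : w ∈ p.support) (z : W) :
    wdist T f z a = wdist T f z w + wdist T f w a ∨
      wdist T f z b = wdist T f z w + wdist T f w b := by
  classical
  obtain ⟨q⟩ := hT.connected.preconnected z a
  obtain ⟨r⟩ := hT.connected.preconnected z b
  exact (hT.isAcyclic.mem_support_or_mem_support hp hw q.bypass r.bypass).imp
    (wdist_eq_add_of_mem_support hT.isAcyclic q.bypass_isPath)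
    (wdist_eq_add_of_mem_support hT.isAcyclic r.bypass_isPath)

theorem exists_endpoint_wdist_lt (hT : T.IsTree) {a b w : W} {p : T.Walk a b}
    (hp : p.IsPath) (hw : w ∈ p.support) {z c c' : W} {k : ℕ}
    (ha : wdist T f z a ≤ k) (hb : wdist T f z b ≤ k)
    (hc : k < wdist T f z c) (hc' : k < wdist T f z c') :
    ∃ u, (u = a ∨ u = b) ∧ wdist T f w u < wdist T f w c ∧ wdist T f w u < wdist T f w c' := by
  have hreach := hT.connected.preconnected
  have hzc := wdist_triangle (f := f) hT.isAcyclic (hreach z w) (hreach w c)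
  have hzc' := wdist_triangle (f := f) hT.isAcyclic (hreach z w) (hreach w c')
  rcases wdist_eq_add_or_wdist_eq_add (f := f) hT hp hw z with h | h
  · exact ⟨a, Or.inl rfl, by omega, by omega⟩
  · exact ⟨b, Or.inr rfl, by omega, by omega⟩

end WeightedDistance

section LeafRoot

variable {V W : Type} {G : SimpleGraph V} {T : SimpleGraph W} {ι : V → W}
  {f : Sym2 W → ℕ} {k : ℕ}

theorem IsLeafRoot.wdist_le_of_adj (h : IsLeafRoot G T ι f k) {u v : V} (huv : G.Adj u v) :
    wdist T f (ι u) (ι v) ≤ k :=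
  (h.2.2.2.2 u v huv.ne).1 huv

theorem IsLeafRoot.lt_wdist_of_not_adj (h : IsLeafRoot G T ι f k) {u v : V} (hne : u ≠ v)
    (huv : ¬ G.Adj u v) : k < wdist T f (ι u) (ι v) :=
  lt_of_not_ge fun hle => huv ((h.2.2.2.2 u v hne).2 hle)

theorem IsLeafRoot.isLeaf (h : IsLeafRoot G T ι f k) (v : V) : IsLeaf T (ι v) :=
  (h.2.2.1 (ι v)).2 ⟨v, rfl⟩

end LeafRoot

theorem stmt_19_general {V : Type} (G : SimpleGraph V)
    (x0 x1 y0 y1 z z' : V)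
    (hdistinct : List.Pairwise (· ≠ ·) [x0, x1, y0, y1, z, z'])
    (hzx0 : G.Adj z x0) (hzx1 : G.Adj z x1)
    (hzy0 : ¬ G.Adj z y0) (hzy1 : ¬ G.Adj z y1)
    (hz'y0 : G.Adj z' y0) (hz'y1 : G.Adj z' y1)
    (hz'x0 : ¬ G.Adj z' x0) (hz'x1 : ¬ G.Adj z' x1) :
    ∀ {W : Type} (T : SimpleGraph W) (ι : V → W), IsUnweightedLeafRoot G T ι →
      ContainsQuartet T (ι x0) (ι x1) (ι y0) (ι y1) := by
  intro W T ι ⟨f, k, hroot⟩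
  simp only [List.pairwise_cons, List.mem_cons, List.not_mem_nil, or_false,
    forall_eq_or_imp, forall_eq] at hdistinct
  obtain ⟨⟨hx, -, -, -, hx0z'⟩, ⟨-, -, -, hx1z'⟩, ⟨hy, hy0z, -⟩, ⟨hy1z, -⟩, -⟩ := hdistinct
  refine ⟨hroot.isLeaf x0, hroot.isLeaf x1, hroot.isLeaf y0, hroot.isLeaf y1,
    hroot.2.1.ne hx, hroot.2.1.ne hy, fun p q hp hq w hwp hwq => ?_⟩
  obtain ⟨u, hu, hu0, hu1⟩ := exists_endpoint_wdist_lt hroot.1 hp hwp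
    (hroot.wdist_le_of_adj hzx0) (hroot.wdist_le_of_adj hzx1)
    (hroot.lt_wdist_of_not_adj hy0z.symm hzy0) (hroot.lt_wdist_of_not_adj hy1z.symm hzy1)
  obtain ⟨v, hv, hv0, hv1⟩ := exists_endpoint_wdist_lt hroot.1 hq hwq
    (hroot.wdist_le_of_adj hz'y0) (hroot.wdist_le_of_adj hz'y1)
    (hroot.lt_wdist_of_not_adj hx0z'.symm hz'x0) (hroot.lt_wdist_of_not_adj hx1z'.symm hz'x1)
  rcases hu with rfl | rfl <;> rcases hv with rfl | rfl <;> omega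

/-- if `G` has six distinct vertices `x₀, x₁, y₀, y₁, z, z'` where `z`
is a common neighbor of `x₀, x₁` not adjacent to `y₀` nor `y₁`, and `z'` is a common
neighbor of `y₀, y₁` not adjacent to `x₀` nor `x₁`, then every unweighted leaf root
of `G` contains the quartet `x₀ x₁ | y₀ y₁`. -/
theorem stmt_19 {V : Type} [Fintype V] (G : SimpleGraph V)
    (x0 x1 y0 y1 z z' : V)
    (hdistinct : List.Pairwise (· ≠ ·) [x0, x1, y0, y1, z, z'])
    (hzx0 : G.Adj z x0) (hzx1 : G.Adj z x1)
    (hzy0 : ¬ G.Adj z y0) (hzy1 : ¬ G.Adj z y1)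
    (hz'y0 : G.Adj z' y0) (hz'y1 : G.Adj z' y1)
    (hz'x0 : ¬ G.Adj z' x0) (hz'x1 : ¬ G.Adj z' x1) :
    ∀ {W : Type} (T : SimpleGraph W) (ι : V → W), IsUnweightedLeafRoot G T ι →
      ContainsQuartet T (ι x0) (ι x1) (ι y0) (ι y1) :=
  stmt_19_general G x0 x1 y0 y1 z z' hdistinct hzx0 hzx1 hzy0 hzy1 hz'y0 hz'y1 hz'x0 hz'x1

end LeafPaper
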